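/- Fix an integer M ≥ 1 and real numbers r_min ≤ r_max. Let f₁ = 30x₂ − 30x₁, f₂ = 3Mx₁r − 3Mx₁x₃ − 3x₂ + 3x₁, f₃ = 3Mx₁x₂ − 8x₃ in ℝ[x₁,x₂,x₃,r]. Suppose there exist a polynomial V ∈ ℝ[x₁,x₂,x₃,r], tuples of polynomials a_e, a_o in ℝ[x₁,x₂,x₃] and b_e, b_o in ℝ[x₁,x₂,x₃,r], and real symmetric positive semidefinite matrices Q_e, Q_o, R_e, R_o of the appropriate sizes, such that the polynomial identity f₁·∂V/∂x₁ + f₂·∂V/∂x₂ + f₃·∂V/∂x₃ − (x₂ − x₁)² = M²(r − r_min)(r_max − r)·(a_eᵀQ_e a_e + a_oᵀQ_o a_o) + (b_eᵀR_e b_e + b_oᵀR_o b_o) holds in ℝ[x₁,x₂,x₃,r]. Then for every r ∈ [r_min, r_max], the rescaled Lorenz system with parameter r is globally stable: every global solution converges to the set of stationary points of its vector field. -/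

import Mathlib

/-!
Along a solution with parameter `r ∈ [r_min, r_max]`, the certificate says that `V` grows at rate
at least `(x₂ - x₁)²`. The classical Lyapunov function `x₁² + x₂² + (x₃ - c)²` of the Lorenz
system makes every solution eventually bounded, so `V` is a bounded nondecreasing function whose
derivative has bounded derivative; Barbalat's lemma then gives `x₂ - x₁ → 0`. From the equations,
`x₃ - 3M x₁² / 8` obeys a stable linear equation with vanishing forcing, and Barbalat's lemma
applied to `x₂ - x₁` gives `3M x₁ (r - x₃) → 0`. So the vector field tends to zero along a
bounded solution, which by compactness means the solution approaches the stationary set.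
-/

open Filter Topology MvPolynomial Set Metric Real

theorem abs_sub_le_of_abs_deriv_le {f f' : ℝ → ℝ} {C a b : ℝ} (hab : a ≤ b)
    (hf : ∀ x ∈ Icc a b, HasDerivAt f (f' x) x) (bound : ∀ x ∈ Icc a b, |f' x| ≤ C) :
    |f b - f a| ≤ C * (b - a) :=
  norm_image_sub_le_of_norm_deriv_le_segment' (fun x hx => (hf x hx).hasDerivWithinAt)
    (fun x hx => bound x (Ico_subset_Icc_self hx)) b (right_mem_Icc.2 hab)

theorem tendsto_zero_of_tendsto_of_hasDerivAt_add {F g g' ε : ℝ → ℝ} {ℓ : ℝ}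
    (hF : ∀ t, HasDerivAt F (g t + ε t) t) (hg : ∀ t, HasDerivAt g (g' t) t)
    (hg' : IsBoundedUnder (· ≤ ·) atTop fun t => |g' t|) (hFℓ : Tendsto F atTop (𝓝 ℓ))
    (hε : Tendsto ε atTop (𝓝 0)) : Tendsto g atTop (𝓝 0) := by
  obtain ⟨L, hL⟩ := hg'
  rw [Metric.tendsto_nhds]
  intro δ hδ
  set h := δ / (4 * (|L| + 1)) with h_def
  have hh : 0 < h := by positivity
  have hLh : |L| * h ≤ δ / 4 := by
    rw [h_def, mul_div_assoc', div_le_div_iff₀ (by positivity) (by norm_num)]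
    nlinarith [abs_nonneg L]
  have hFh : Tendsto (fun t => F (t + h) - F t) atTop (𝓝 0) := by
    simpa using (hFℓ.comp (tendsto_atTop_add_const_right _ h tendsto_id)).sub hFℓ
  obtain ⟨T, hT⟩ := eventually_atTop.1
    ((eventually_map.1 hL).and (hε.eventually (closedBall_mem_nhds 0 (by positivity : 0 < δ / 4))))
  filter_upwards [eventually_ge_atTop T, hFh.eventually (ball_mem_nhds 0 (by positivity :
    0 < δ / 4 * h))] with t ht hFt
  simp only [Real.dist_eq, sub_zero] at hT hFt ⊢
  -- on `[t, t + h]` the slope of `F` stays within `δ / 2` of `g t`, while `F` barely moves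
  have key : |(F (t + h) - g t * (t + h)) - (F t - g t * t)| ≤ δ / 2 * h := by
    have := abs_sub_le_of_abs_deriv_le (f := fun s => F s - g t * s) (a := t) (b := t + h)
      (C := δ / 2) (by linarith) (fun s _ => (hF s).sub ((hasDerivAt_id s).const_mul (g t)))
      fun s hs => by
        have hgs : |g s - g t| ≤ |L| * (s - t) :=
          abs_sub_le_of_abs_deriv_le hs.1 (fun x _ => hg x) fun x hx =>
            (hT x (by linarith [hx.1])).1.trans (le_abs_self L)
        have hεs := (hT s (by linarith [hs.1])).2
        have : |L| * (s - t) ≤ |L| * h :=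
          mul_le_mul_of_nonneg_left (by linarith [hs.2]) (abs_nonneg L)
        calc |g s + ε s - g t * 1| ≤ |g s - g t| + |ε s| := by
              rw [mul_one, add_sub_right_comm]; exact abs_add_le _ _
          _ ≤ δ / 2 := by linarith
    rwa [add_sub_cancel_left] at this
  have hgt : g t * h = (F (t + h) - F t) - ((F (t + h) - g t * (t + h)) - (F t - g t * t)) := by
    ring
  have : |g t| * h < δ * h := by
    calc |g t| * h = |g t * h| := by rw [abs_mul, abs_of_pos hh]
      _ ≤ |F (t + h) - F t| + |(F (t + h) - g t * (t + h)) - (F t - g t * t)| := by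
          rw [hgt]; exact abs_sub _ _
      _ < δ * h := by linarith [mul_pos hδ hh]
  exact lt_of_mul_lt_mul_right this hh.le

theorem le_mul_exp_add_of_hasDerivAt_le {f f' : ℝ → ℝ} {k ε a t : ℝ} (hk : 0 < k)
    (hε : 0 ≤ ε) (hf : ∀ t, HasDerivAt f (f' t) t) (bound : ∀ t ≥ a, f' t ≤ -k * f t + ε)
    (ht : a ≤ t) : f t ≤ f a * exp (-k * (t - a)) + ε / k := by
  have h := le_gronwallBound_of_liminf_deriv_right_le (b := t) (K := -k)
    (fun x _ => (hf x).continuousAt.continuousWithinAt)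
    (fun x _ r hr => (hf x).hasDerivWithinAt.liminf_right_slope_le hr) le_rfl
    (fun x hx => bound x hx.1) t ⟨ht, le_rfl⟩
  rw [gronwallBound_of_K_ne_0 (neg_ne_zero.2 hk.ne')] at h
  have : 0 ≤ ε / k * exp (-k * (t - a)) := by positivity
  calc f t ≤ _ := h
    _ = f a * exp (-k * (t - a)) + ε / k - ε / k * exp (-k * (t - a)) := by
      rw [div_neg]; ring
    _ ≤ _ := by linarith

theorem tendsto_zero_of_hasDerivAt_eq_neg_mul_add {p c : ℝ → ℝ} {k : ℝ} (hk : 0 < k)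
    (hp : ∀ t, HasDerivAt p (-k * p t + c t) t) (hc : Tendsto c atTop (𝓝 0)) :
    Tendsto p atTop (𝓝 0) := by
  rw [Metric.tendsto_nhds]
  intro δ hδ
  obtain ⟨T, hT⟩ := eventually_atTop.1
    (hc.eventually (closedBall_mem_nhds 0 (half_pos (mul_pos hk hδ))))
  have hc' : ∀ s ≥ T, |c s| ≤ k * δ / 2 := fun s hs => by
    simpa [Real.dist_eq] using hT s hs
  have hexp : Tendsto (fun t => |p T| * exp (-k * (t - T))) atTop (𝓝 0) := by
    simpa [sub_eq_add_neg] using (tendsto_exp_atBot.comp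
      ((tendsto_id.atTop_add tendsto_const_nhds).const_mul_atTop_of_neg
        (neg_lt_zero.2 hk) : Tendsto (fun t => -k * (t + -T)) atTop atBot)).const_mul |p T|
  filter_upwards [eventually_ge_atTop T, hexp.eventually (gt_mem_nhds (half_pos hδ))]
    with t ht hsmall
  have upper := le_mul_exp_add_of_hasDerivAt_le (ε := k * δ / 2) hk (by positivity) hp
    (fun s hs => by linarith [(abs_le.1 (hc' s hs)).2]) ht
  have lower := le_mul_exp_add_of_hasDerivAt_le (f := fun s => -p s) (ε := k * δ / 2) hk
    (by positivity) (fun s => (hp s).neg) (fun s hs => by linarith [(abs_le.1 (hc' s hs)).1]) ht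
  have hkδ : k * δ / 2 / k = δ / 2 := by field_simp
  have hpT : |p T * exp (-k * (t - T))| < δ / 2 := by
    rwa [abs_mul, abs_of_pos (exp_pos _)]
  rw [Real.dist_eq, sub_zero, abs_lt]
  constructor <;> linarith [abs_lt.1 hpT]

theorem tendsto_infDist_preimage_zero {α E F : Type*} [PseudoMetricSpace E] [NormedAddCommGroup F]
    {Φ : E → F} (hΦ : Continuous Φ) {K : Set E} (hK : IsCompact K) {l : Filter α} {y : α → E}
    (hyK : ∀ᶠ t in l, y t ∈ K) (hy : Tendsto (Φ ∘ y) l (𝓝 0)) :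
    Tendsto (fun t => infDist (y t) (Φ ⁻¹' {0})) l (𝓝 0) := by
  rw [Metric.tendsto_nhds]
  intro ε hε
  have hfar : IsClosed {z | ε ≤ infDist z (Φ ⁻¹' {0})} :=
    isClosed_le continuous_const (continuous_infDist_pt _)
  obtain ⟨m, hm, hmK⟩ := (hK.inter_right hfar).exists_forall_le' hΦ.norm.continuousOn (a := 0)
    fun z hz => norm_pos_iff.2 fun h0 => by
      have hz' : ε ≤ infDist z (Φ ⁻¹' {0}) := hz.2
      linarith [infDist_zero_of_mem (s := Φ ⁻¹' {0}) h0]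
  filter_upwards [hyK, (tendsto_norm_zero.comp hy).eventually (gt_mem_nhds hm)] with t htK htm
  rw [Real.dist_eq, sub_zero, abs_of_nonneg infDist_nonneg]
  by_contra! h
  exact (hmK (y t) ⟨htK, h⟩).not_gt htm

namespace MvPolynomial

theorem isBoundedUnder_eval {ι : Type*} {v : ℝ → ι → ℝ} {K : Set (ι → ℝ)} (hK : IsCompact K)
    (hvK : ∀ᶠ t in atTop, v t ∈ K) (P : MvPolynomial ι ℝ) :
    IsBoundedUnder (· ≤ ·) atTop fun t => |eval (v t) P| := by
  obtain ⟨B, hB⟩ := hK.exists_bound_of_continuousOn (continuous_eval P).continuousOn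
  exact ⟨B, hvK.mono fun t ht => hB _ ht⟩

variable {ι : Type*} [Fintype ι] [DecidableEq ι]

theorem hasDerivAt_eval {v : ℝ → ι → ℝ} {v' : ι → ℝ} {t : ℝ} (hv : HasDerivAt v v' t)
    (P : MvPolynomial ι ℝ) :
    HasDerivAt (fun s => eval (v s) P) (∑ i, v' i * eval (v t) (pderiv i P)) t := by
  induction P using MvPolynomial.induction_on with
  | C a => simpa using hasDerivAt_const t a
  | add p q hp hq => simpa [Finset.sum_add_distrib, mul_add] using hp.fun_add hq
  | mul_X p i hp =>
    simp only [map_mul, eval_X]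
    refine (hp.fun_mul (hasDerivAt_pi.1 hv i)).congr_deriv ?_
    simp [pderiv_X, Pi.single_apply, mul_add, Finset.sum_add_distrib, apply_ite, Finset.mul_sum,
      mul_comm, mul_left_comm, add_comm]

noncomputable def lieDerivative (f : ι → MvPolynomial ι ℝ) (P : MvPolynomial ι ℝ) :
    MvPolynomial ι ℝ :=
  ∑ i, f i * pderiv i P

variable {f : ι → MvPolynomial ι ℝ} {v : ℝ → ι → ℝ}

theorem hasDerivAt_eval_lieDerivative (hv : ∀ t, HasDerivAt v (fun i => eval (v t) (f i)) t)
    (P : MvPolynomial ι ℝ) (t : ℝ) :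
    HasDerivAt (fun s => eval (v s) P) (eval (v t) (lieDerivative f P)) t := by
  simpa [lieDerivative] using hasDerivAt_eval (hv t) P

theorem tendsto_zero_of_le_eval_lieDerivative {K : Set (ι → ℝ)} {V : MvPolynomial ι ℝ} {p : ℝ → ℝ}
    (hv : ∀ t, HasDerivAt v (fun i => eval (v t) (f i)) t) (hK : IsCompact K)
    (hvK : ∀ᶠ t in atTop, v t ∈ K) (hp : ∀ t, 0 ≤ p t)
    (hpV : ∀ t, p t ≤ eval (v t) (lieDerivative f V)) : Tendsto p atTop (𝓝 0) := by
  have hV := hasDerivAt_eval_lieDerivative hv V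
  have hmono : Monotone fun t => eval (v t) V :=
    monotone_of_hasDerivAt_nonneg hV fun t => (hp t).trans (hpV t)
  obtain ⟨B, hB⟩ := isBoundedUnder_eval hK hvK V
  obtain ⟨T, hT⟩ := eventually_atTop.1 (eventually_map.1 hB)
  have hbdd : BddAbove (range fun t => eval (v t) V) :=
    ⟨B, forall_mem_range.2 fun t =>
      (hmono (le_max_left t T)).trans ((le_abs_self _).trans (hT _ (le_max_right t T)))⟩
  have hV' : Tendsto (fun t => eval (v t) (lieDerivative f V)) atTop (𝓝 0) :=
    tendsto_zero_of_tendsto_of_hasDerivAt_add (ε := 0) (fun t => by simpa using hV t)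
      (hasDerivAt_eval_lieDerivative hv _) (isBoundedUnder_eval hK hvK _)
      (tendsto_atTop_ciSup hmono hbdd) tendsto_const_nhds
  exact squeeze_zero hp hpV hV'

end MvPolynomial

-- The parameter `r` is the fourth coordinate, with zero velocity, as in the certificate.
noncomputable def lorenzField (M : ℝ) : Fin 4 → MvPolynomial (Fin 4) ℝ :=
  ![30 * X 1 - 30 * X 0, C (3 * M) * X 0 * X 3 - C (3 * M) * X 0 * X 2 - 3 * X 1 + 3 * X 0,
    C (3 * M) * X 0 * X 1 - 8 * X 2, 0]

theorem lieDerivative_lorenzField (M : ℝ) (V : MvPolynomial (Fin 4) ℝ) :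
    lieDerivative (lorenzField M) V =
      (30 * X 1 - 30 * X 0) * pderiv 0 V
        + (C (3 * M) * X 0 * X 3 - C (3 * M) * X 0 * X 2 - 3 * X 1 + 3 * X 0) * pderiv 1 V
        + (C (3 * M) * X 0 * X 1 - 8 * X 2) * pderiv 2 V := by
  simp [lieDerivative, lorenzField, Fin.sum_univ_four]

def IsLorenzSolution (M r : ℝ) (y : ℝ → EuclideanSpace ℝ (Fin 3)) : Prop :=
  ∀ t : ℝ,
    HasDerivAt (fun u => y u 0) (30 * y t 1 - 30 * y t 0) t ∧
    HasDerivAt (fun u => y u 1)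
      (3 * M * y t 0 * r - 3 * M * y t 0 * y t 2 - 3 * y t 1 + 3 * y t 0) t ∧
    HasDerivAt (fun u => y u 2) (3 * M * y t 0 * y t 1 - 8 * y t 2) t

def lorenzState (r : ℝ) (z : EuclideanSpace ℝ (Fin 3)) : Fin 4 → ℝ := ![z 0, z 1, z 2, r]

theorem continuous_lorenzState (r : ℝ) : Continuous (lorenzState r) := by
  unfold lorenzState
  fun_prop

namespace IsLorenzSolution

variable {M r : ℝ} {y : ℝ → EuclideanSpace ℝ (Fin 3)}

theorem hasDerivAt_lorenzState (hy : IsLorenzSolution M r y) (t : ℝ) :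
    HasDerivAt (fun s => lorenzState r (y s))
      (fun i => eval (lorenzState r (y t)) (lorenzField M i)) t := by
  obtain ⟨h₀, h₁, h₂⟩ := hy t
  rw [hasDerivAt_pi]
  intro i
  fin_cases i
  · simpa [lorenzState, lorenzField] using h₀
  · simpa [lorenzState, lorenzField, mul_comm] using h₁
  · simpa [lorenzState, lorenzField] using h₂
  · simpa [lorenzState, lorenzField] using hasDerivAt_const t r

theorem exists_norm_le (hM : 1 ≤ M) (hy : IsLorenzSolution M r y) :
    ∃ R, ∀ t ≥ 0, ‖y t‖ ≤ R := by
  -- this choice of `c` gives `U' ≤ -6 U + 8 c²`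
  set c := M * r + 11
  set U := fun t => (M * y t 0) ^ 2 + (M * y t 1) ^ 2 + (M * y t 2 - c) ^ 2 with hU
  have hU' : ∀ t, HasDerivAt U (2 * (M * y t 0) * (M * (30 * y t 1 - 30 * y t 0))
      + 2 * (M * y t 1) * (M * (3 * M * y t 0 * r - 3 * M * y t 0 * y t 2 - 3 * y t 1 + 3 * y t 0))
      + 2 * (M * y t 2 - c) * (M * (3 * M * y t 0 * y t 1 - 8 * y t 2))) t := fun t => by
    obtain ⟨h₀, h₁, h₂⟩ := hy t
    exact (((h₀.const_mul M).fun_pow 2).fun_add ((h₁.const_mul M).fun_pow 2)).fun_add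
      (((h₂.const_mul M).sub_const c).fun_pow 2) |>.congr_deriv (by ring)
  have hUle : ∀ t ≥ 0, U t ≤ U 0 + 8 * c ^ 2 / 6 := fun t ht => by
    refine (le_mul_exp_add_of_hasDerivAt_le (k := 6) (ε := 8 * c ^ 2) (by norm_num) (by positivity)
      hU' (fun s _ => ?_) ht).trans ?_
    · nlinarith [sq_nonneg (M * y s 0), sq_nonneg (M * y s 1), sq_nonneg (5 * (M * y s 2) - c),
        sq_nonneg c]
    · gcongr
      exact mul_le_of_le_one_right (by positivity) (exp_le_one_iff.2 (by nlinarith))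
  refine ⟨√(2 * (U 0 + 8 * c ^ 2 / 6) + 2 * c ^ 2), fun t ht => ?_⟩
  have hUt := hUle t ht
  rw [Real.le_sqrt (norm_nonneg _) (by positivity), EuclideanSpace.real_norm_sq_eq,
    Fin.sum_univ_three]
  simp only [hU] at hUt
  nlinarith [sq_nonneg (y t 0), sq_nonneg (y t 1), sq_nonneg (y t 2), sq_nonneg (M * y t 2 - 2 * c),
    mul_nonneg (sub_nonneg.2 hM) (sq_nonneg (y t 0)),
    mul_nonneg (sub_nonneg.2 hM) (sq_nonneg (y t 1)),
    mul_nonneg (sub_nonneg.2 hM) (sq_nonneg (y t 2))]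

end IsLorenzSolution

theorem tendsto_eval_lorenzField {M : ℝ} {v : ℝ → Fin 4 → ℝ} {K : Set (Fin 4 → ℝ)}
    (hv : ∀ t, HasDerivAt v (fun i => eval (v t) (lorenzField M i)) t) (hK : IsCompact K)
    (hvK : ∀ᶠ t in atTop, v t ∈ K) (he : Tendsto (fun t => v t 1 - v t 0) atTop (𝓝 0)) :
    Tendsto (fun t i => eval (v t) (lorenzField M i)) atTop (𝓝 0) := by
  have hvi : ∀ t i, HasDerivAt (fun s => v s i) (eval (v t) (lorenzField M i)) t :=
    fun t => hasDerivAt_pi.1 (hv t)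
  have hx₁ : IsBoundedUnder (· ≤ ·) atTop (norm ∘ fun t => v t 0) := by
    simpa [Function.comp_def] using isBoundedUnder_eval hK hvK (X 0)
  have hp : Tendsto (fun t => v t 2 - 3 * M / 8 * v t 0 ^ 2) atTop (𝓝 0) := by
    refine tendsto_zero_of_hasDerivAt_eq_neg_mul_add
      (c := fun t => -(39 / 2) * M * (v t 0 * (v t 1 - v t 0))) (by norm_num : (0 : ℝ) < 8)
      (fun t => ?_) ?_
    · refine ((hvi t 2).sub (((hvi t 0).pow 2).const_mul (3 * M / 8))).congr_deriv ?_
      simp [lorenzField]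
      ring
    · simpa using (isBoundedUnder_le_mul_tendsto_zero hx₁ he).const_mul (-(39 / 2) * M)
  have hq : Tendsto (fun t => eval (v t) (C (3 * M) * X 0 * (X 3 - X 2))) atTop (𝓝 0) := by
    refine tendsto_zero_of_tendsto_of_hasDerivAt_add (ε := fun t => -33 * (v t 1 - v t 0))
      (fun t => ?_) (hasDerivAt_eval_lieDerivative hv _) (isBoundedUnder_eval hK hvK _) he
      (by simpa using he.const_mul (-33))
    refine ((hvi t 1).sub (hvi t 0)).congr_deriv ?_
    simp [lorenzField]
    ring
  rw [tendsto_pi_nhds]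
  intro i
  fin_cases i
  · simpa [lorenzField, mul_sub] using he.const_mul 30
  · have h := hq.sub (he.const_mul 3)
    rw [mul_zero, sub_zero] at h
    refine h.congr fun t => ?_
    simp [lorenzField]
    ring
  · have h := ((isBoundedUnder_le_mul_tendsto_zero hx₁ he).const_mul (3 * M)).sub
      (hp.const_mul 8)
    rw [mul_zero, mul_zero, sub_zero] at h
    refine h.congr fun t => ?_
    simp [lorenzField]
    ring
  · simp [lorenzField]

theorem IsLorenzSolution.tendsto_infDist_stationary {M r : ℝ} {y : ℝ → EuclideanSpace ℝ (Fin 3)}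
    (hM : 1 ≤ M) (hy : IsLorenzSolution M r y) {V : MvPolynomial (Fin 4) ℝ}
    (hV : ∀ x : Fin 4 → ℝ, x 3 = r → (x 1 - x 0) ^ 2 ≤ eval x (lieDerivative (lorenzField M) V)) :
    Tendsto (fun t => infDist (y t)
      ((fun z i => eval (lorenzState r z) (lorenzField M i)) ⁻¹' {0})) atTop (𝓝 0) := by
  obtain ⟨R, hR⟩ := hy.exists_norm_le hM
  have hyK : ∀ᶠ t in atTop, y t ∈ closedBall 0 R :=
    eventually_atTop.2 ⟨0, fun t ht => mem_closedBall_zero_iff.2 (hR t ht)⟩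
  have hv := hy.hasDerivAt_lorenzState
  have hK := (isCompact_closedBall (0 : EuclideanSpace ℝ (Fin 3)) R).image
    (continuous_lorenzState r)
  have hvK := hyK.mono fun t ht => mem_image_of_mem (lorenzState r) ht
  have he : Tendsto (fun t => y t 1 - y t 0) atTop (𝓝 0) := by
    have := tendsto_zero_of_le_eval_lieDerivative hv hK hvK (fun t => sq_nonneg _)
      fun t => hV _ rfl
    exact (tendsto_zero_iff_abs_tendsto_zero _).2
      (by simpa [lorenzState, Real.sqrt_sq_eq_abs, Function.comp_def] using this.sqrt)
  exact tendsto_infDist_preimage_zero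
    (continuous_pi fun i => (continuous_eval _).comp (continuous_lorenzState r))
    (isCompact_closedBall 0 R) hyK (tendsto_eval_lorenzField hv hK hvK he)

theorem Matrix.PosSemidef.eval_sum_sum_C_mul_nonneg {m σ : Type*} [Fintype m]
    {Q : Matrix m m ℝ} (hQ : Q.PosSemidef) (a : m → MvPolynomial σ ℝ) (x : σ → ℝ) :
    0 ≤ eval x (∑ i, ∑ j, C (Q i j) * a i * a j) := by
  simpa [dotProduct, Matrix.mulVec, Finset.mul_sum, mul_comm, mul_left_comm] using
    hQ.dotProduct_mulVec_nonneg fun i => eval x (a i)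

theorem rescaled_lorenz_globally_stable_of_sos_general
    (M : ℤ) (hM : 1 ≤ M) (rmin rmax : ℝ)
    (me mo ne' no : ℕ)
    (V : MvPolynomial (Fin 4) ℝ)
    (ae : Fin me → MvPolynomial (Fin 3) ℝ) (ao : Fin mo → MvPolynomial (Fin 3) ℝ)
    (be : Fin ne' → MvPolynomial (Fin 4) ℝ) (bo : Fin no → MvPolynomial (Fin 4) ℝ)
    (Qe : Matrix (Fin me) (Fin me) ℝ) (Qo : Matrix (Fin mo) (Fin mo) ℝ)
    (Re : Matrix (Fin ne') (Fin ne') ℝ) (Ro : Matrix (Fin no) (Fin no) ℝ)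
    (hQe : Qe.PosSemidef) (hQo : Qo.PosSemidef) (hRe : Re.PosSemidef) (hRo : Ro.PosSemidef)
    (hmain :
      (30 * X 1 - 30 * X 0) * pderiv 0 V
        + (C (3 * (M : ℝ)) * X 0 * X 3 - C (3 * (M : ℝ)) * X 0 * X 2 - 3 * X 1 + 3 * X 0)
            * pderiv 1 V
        + (C (3 * (M : ℝ)) * X 0 * X 1 - 8 * X 2) * pderiv 2 V
        - (X 1 - X 0) ^ 2
      = C ((M : ℝ) ^ 2) * (X 3 - C rmin) * (C rmax - X 3)
          * (rename Fin.castSucc (∑ i, ∑ j, C (Qe i j) * ae i * ae j)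
              + rename Fin.castSucc (∑ i, ∑ j, C (Qo i j) * ao i * ao j))
        + ((∑ i, ∑ j, C (Re i j) * be i * be j) + ∑ i, ∑ j, C (Ro i j) * bo i * bo j)) :
    ∀ r : ℝ, rmin ≤ r → r ≤ rmax →
      ∀ y : ℝ → EuclideanSpace ℝ (Fin 3),
        (∀ t : ℝ,
          HasDerivAt (fun u => y u 0) (30 * y t 1 - 30 * y t 0) t ∧
          HasDerivAt (fun u => y u 1)
            (3 * (M : ℝ) * y t 0 * r - 3 * (M : ℝ) * y t 0 * y t 2 - 3 * y t 1 + 3 * y t 0) t ∧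
          HasDerivAt (fun u => y u 2) (3 * (M : ℝ) * y t 0 * y t 1 - 8 * y t 2) t) →
        Tendsto (fun t => Metric.infDist (y t)
            {z : EuclideanSpace ℝ (Fin 3) |
              30 * z 1 - 30 * z 0 = 0 ∧
              3 * (M : ℝ) * z 0 * r - 3 * (M : ℝ) * z 0 * z 2 - 3 * z 1 + 3 * z 0 = 0 ∧
              3 * (M : ℝ) * z 0 * z 1 - 8 * z 2 = 0})
          atTop (𝓝 0) := by
  intro r hrmin hrmax y hy
  have hlyap : ∀ x : Fin 4 → ℝ, x 3 = r →
      (x 1 - x 0) ^ 2 ≤ eval x (lieDerivative (lorenzField M) V) := by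
    intro x hx
    have h := congrArg (eval x) hmain
    rw [← lieDerivative_lorenzField] at h
    simp only [map_add, map_sub, map_mul, map_pow, eval_X, eval_C, eval_rename, hx] at h
    have hweight : 0 ≤ (M : ℝ) ^ 2 * (r - rmin) * (rmax - r) := by
      have := sub_nonneg.2 hrmin; have := sub_nonneg.2 hrmax; positivity
    nlinarith [mul_nonneg hweight (add_nonneg (hQe.eval_sum_sum_C_mul_nonneg ae (x ∘ Fin.castSucc))
      (hQo.eval_sum_sum_C_mul_nonneg ao (x ∘ Fin.castSucc))),
      hRe.eval_sum_sum_C_mul_nonneg be x, hRo.eval_sum_sum_C_mul_nonneg bo x]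
  convert IsLorenzSolution.tendsto_infDist_stationary (by exact_mod_cast hM) hy hlyap using 3
  ext z
  rw [mem_preimage, mem_singleton_iff, _root_.funext_iff]
  simp [lorenzState, lorenzField, Fin.forall_fin_succ]

/-- Block-diagonal sum-of-squares certificate: variables are `X 0 = x₁`,
`X 1 = x₂`, `X 2 = x₃`, `X 3 = r`. If the Gram-matrix polynomial identity holds with
positive semidefinite matrices `Q_e, Q_o, R_e, R_o`, then for every `r ∈ [r_min, r_max]`
the rescaled Lorenz system with parameter `r` is globally stable. -/
theorem rescaled_lorenz_globally_stable_of_sos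
    (M : ℤ) (hM : 1 ≤ M) (rmin rmax : ℝ) (hr : rmin ≤ rmax)
    (me mo ne' no : ℕ)
    (V : MvPolynomial (Fin 4) ℝ)
    (ae : Fin me → MvPolynomial (Fin 3) ℝ) (ao : Fin mo → MvPolynomial (Fin 3) ℝ)
    (be : Fin ne' → MvPolynomial (Fin 4) ℝ) (bo : Fin no → MvPolynomial (Fin 4) ℝ)
    (Qe : Matrix (Fin me) (Fin me) ℝ) (Qo : Matrix (Fin mo) (Fin mo) ℝ)
    (Re : Matrix (Fin ne') (Fin ne') ℝ) (Ro : Matrix (Fin no) (Fin no) ℝ)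
    (hQe : Qe.PosSemidef) (hQo : Qo.PosSemidef) (hRe : Re.PosSemidef) (hRo : Ro.PosSemidef)
    (hmain :
      (30 * X 1 - 30 * X 0) * pderiv 0 V
        + (C (3 * (M : ℝ)) * X 0 * X 3 - C (3 * (M : ℝ)) * X 0 * X 2 - 3 * X 1 + 3 * X 0)
            * pderiv 1 V
        + (C (3 * (M : ℝ)) * X 0 * X 1 - 8 * X 2) * pderiv 2 V
        - (X 1 - X 0) ^ 2
      = C ((M : ℝ) ^ 2) * (X 3 - C rmin) * (C rmax - X 3)
          * (rename Fin.castSucc (∑ i, ∑ j, C (Qe i j) * ae i * ae j)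
              + rename Fin.castSucc (∑ i, ∑ j, C (Qo i j) * ao i * ao j))
        + ((∑ i, ∑ j, C (Re i j) * be i * be j) + ∑ i, ∑ j, C (Ro i j) * bo i * bo j)) :
    ∀ r : ℝ, rmin ≤ r → r ≤ rmax →
      ∀ y : ℝ → EuclideanSpace ℝ (Fin 3),
        (∀ t : ℝ,
          HasDerivAt (fun u => y u 0) (30 * y t 1 - 30 * y t 0) t ∧
          HasDerivAt (fun u => y u 1)
            (3 * (M : ℝ) * y t 0 * r - 3 * (M : ℝ) * y t 0 * y t 2 - 3 * y t 1 + 3 * y t 0) t ∧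
          HasDerivAt (fun u => y u 2) (3 * (M : ℝ) * y t 0 * y t 1 - 8 * y t 2) t) →
        Tendsto (fun t => Metric.infDist (y t)
            {z : EuclideanSpace ℝ (Fin 3) |
              30 * z 1 - 30 * z 0 = 0 ∧
              3 * (M : ℝ) * z 0 * r - 3 * (M : ℝ) * z 0 * z 2 - 3 * z 1 + 3 * z 0 = 0 ∧
              3 * (M : ℝ) * z 0 * z 1 - 8 * z 2 = 0})
          atTop (𝓝 0) :=
  rescaled_lorenz_globally_stable_of_sos_general M hM rmin rmax me mo ne' no V ae ao be bo Qe Qo Re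
    Ro hQe hQo hRe hRo hmain
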